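/- X₁ and X₂ are not homeomorphic topological spaces. -/

import Mathlib

/-! Removing the node `[(0,0)] = [(0,1)]` disconnects `X₁`: the other identifications
`(1,j) ∼ (2,j)` stay inside one sheet, so the two punctured sheets are disjoint open sets.
In `X₂` the sheets are glued at two distinct points, the node and `[(1,0)] = [(2,1)]`, and a
sphere minus finitely many points is connected, so removing any one point leaves `X₂` connected.
Being disconnected by removing a point is a topological invariant. -/

open OnePoint

/-- Identifications `(0,0)∼(0,1)`, `(1,0)∼(2,0)`, `(1,1)∼(2,1)` on `S × Fin 2`. -/
def relEx3₁ : OnePoint ℂ × Fin 2 → OnePoint ℂ × Fin 2 → Prop := fun a b =>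
  (a = (((0 : ℂ) : OnePoint ℂ), 0) ∧ b = (((0 : ℂ) : OnePoint ℂ), 1)) ∨
  (a = (((1 : ℂ) : OnePoint ℂ), 0) ∧ b = (((2 : ℂ) : OnePoint ℂ), 0)) ∨
  (a = (((1 : ℂ) : OnePoint ℂ), 1) ∧ b = (((2 : ℂ) : OnePoint ℂ), 1))

/-- Identifications `(0,0)∼(0,1)`, `(1,0)∼(2,1)`, `(1,1)∼(2,0)` on `S × Fin 2`. -/
def relEx3₂ : OnePoint ℂ × Fin 2 → OnePoint ℂ × Fin 2 → Prop := fun a b =>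
  (a = (((0 : ℂ) : OnePoint ℂ), 0) ∧ b = (((0 : ℂ) : OnePoint ℂ), 1)) ∨
  (a = (((1 : ℂ) : OnePoint ℂ), 0) ∧ b = (((2 : ℂ) : OnePoint ℂ), 1)) ∨
  (a = (((1 : ℂ) : OnePoint ℂ), 1) ∧ b = (((2 : ℂ) : OnePoint ℂ), 0))

open Set

theorem OnePoint.isConnected_compl_of_countable {E : Type*} [NormedAddCommGroup E]
    [NormedSpace ℝ E] (hE : 1 < Module.rank ℝ E) {F : Set (OnePoint E)} (hF : F.Countable) :
    IsConnected Fᶜ := by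
  have : Nontrivial E := rank_pos_iff_nontrivial.mp (zero_lt_one.trans hE)
  set G : Set E := (↑) ⁻¹' F
  have hG : G.Countable := hF.preimage OnePoint.coe_injective
  have hGc : IsConnected Gᶜ := hG.isConnected_compl_of_one_lt_rank hE
  have hsub : ((↑) : E → OnePoint E) '' Gᶜ ⊆ Fᶜ := by
    rintro _ ⟨z, hz, rfl⟩
    exact hz
  have hdense : Dense (((↑) : E → OnePoint E) '' Gᶜ) :=
    OnePoint.denseRange_coe.dense_image OnePoint.continuous_coe (hG.dense_compl ℝ)
  exact (hGc.image _ OnePoint.continuous_coe.continuousOn).subset_closure hsub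
    (by simp [hdense.closure_eq])

section SaturatedSet

variable {α : Type*} {r : α → α → Prop} {V : Set α}

/-- `V` is a union of equivalence classes of the equivalence relation generated by `r`. -/
def RelSaturated (r : α → α → Prop) (V : Set α) : Prop :=
  ∀ ⦃a b⦄, r a b → (a ∈ V ↔ b ∈ V)

theorem RelSaturated.preimage_image_mk (hV : RelSaturated r V) :
    Quot.mk r ⁻¹' (Quot.mk r '' V) = V := by
  refine subset_antisymm ?_ (subset_preimage_image _ _)
  rintro a ⟨b, hb, hba⟩
  have := congrArg (Quot.lift (· ∈ V) fun _ _ h => propext (hV h)) hba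
  exact cast this hb

theorem RelSaturated.mk_ne_mk (hV : RelSaturated r V) {a b : α} (ha : a ∈ V) (hb : b ∉ V) :
    Quot.mk r a ≠ Quot.mk r b := fun h =>
  hb <| hV.preimage_image_mk.subset ⟨a, ha, h⟩

theorem RelSaturated.isOpen_image_mk [TopologicalSpace α] (hV : RelSaturated r V)
    (hVo : IsOpen V) : IsOpen (Quot.mk r '' V) := by
  rw [← isQuotientMap_quot_mk.isOpen_preimage, hV.preimage_image_mk]
  exact hVo

theorem Quot.finite_mk_preimage_singleton {P : Set α} (hP : P.Finite)
    (hr : ∀ ⦃a b⦄, r a b → a ∈ P ∧ b ∈ P) (q : Quot r) : (Quot.mk r ⁻¹' {q}).Finite := by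
  obtain ⟨a, rfl⟩ := Quot.exists_rep q
  have hsat : RelSaturated r (insert a P) := fun a b h => by simp [(hr h).1, (hr h).2]
  refine (hP.insert a).subset ?_
  rw [← hsat.preimage_image_mk]
  exact preimage_mono (by simp)

end SaturatedSet

theorem isConnected_range_inter_compl_singleton {Y X : Type*} [TopologicalSpace Y]
    [TopologicalSpace X] (hY : ∀ F : Set Y, F.Finite → IsConnected Fᶜ) {f : Y → X}
    (hf : Continuous f) {q : X} (hq : (f ⁻¹' {q}).Finite) : IsConnected (range f ∩ {q}ᶜ) := by
  rw [← image_preimage_eq_range_inter, preimage_compl]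
  exact (hY _ hq).image f hf.continuousOn

theorem isConnected_compl_singleton_of_two_sheets {Y X : Type*} [TopologicalSpace Y]
    [TopologicalSpace X] (hY : ∀ F : Set Y, F.Finite → IsConnected Fᶜ) {σ₀ σ₁ : Y → X}
    (h₀ : Continuous σ₀) (h₁ : Continuous σ₁) (hfin₀ : ∀ q, (σ₀ ⁻¹' {q}).Finite)
    (hfin₁ : ∀ q, (σ₁ ⁻¹' {q}).Finite) (hcover : range σ₀ ∪ range σ₁ = univ) {x y : X}
    (hxy : x ≠ y) (hx : x ∈ range σ₀ ∩ range σ₁) (hy : y ∈ range σ₀ ∩ range σ₁) (q : X) :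
    IsConnected {q}ᶜ := by
  have hsplit : {q}ᶜ = (range σ₀ ∩ {q}ᶜ) ∪ (range σ₁ ∩ {q}ᶜ) := by
    rw [← union_inter_distrib_right, hcover, univ_inter]
  have hmeet : ((range σ₀ ∩ {q}ᶜ) ∩ (range σ₁ ∩ {q}ᶜ)).Nonempty := by
    by_cases hxq : x = q
    · exact ⟨y, ⟨hy.1, fun h => hxy (hxq.trans h.symm)⟩, hy.2, fun h => hxy (hxq.trans h.symm)⟩
    · exact ⟨x, ⟨hx.1, hxq⟩, hx.2, hxq⟩
  rw [hsplit]
  exact (isConnected_range_inter_compl_singleton hY h₀ (hfin₀ q)).union hmeet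
    (isConnected_range_inter_compl_singleton hY h₁ (hfin₁ q))

theorem Homeomorph.isConnected_compl_singleton_iff {X Y : Type*} [TopologicalSpace X]
    [TopologicalSpace Y] (e : X ≃ₜ Y) (x : X) :
    IsConnected ({e x}ᶜ : Set Y) ↔ IsConnected ({x}ᶜ : Set X) := by
  rw [← e.isConnected_preimage, preimage_compl, ← image_singleton, e.preimage_image]

theorem not_isPreconnected_union_of_isOpen {X : Type*} [TopologicalSpace X] {u v : Set X}
    (hu : IsOpen u) (hv : IsOpen v) (huv : Disjoint u v) (hu' : u.Nonempty)
    (hv' : v.Nonempty) : ¬ IsPreconnected (u ∪ v) := by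
  intro h
  rcases h.subset_or_subset hu hv huv subset_rfl with h | h
  · obtain ⟨x, hx⟩ := hv'
    exact disjoint_left.1 huv (h (Or.inr hx)) hx
  · obtain ⟨x, hx⟩ := hu'
    exact disjoint_left.1 huv hx (h (Or.inl hx))

theorem not_isConnected_compl_node_X1 :
    ¬ IsConnected ({Quot.mk relEx3₁ (((0 : ℂ) : OnePoint ℂ), 0)}ᶜ : Set (Quot relEx3₁)) := by
  set V : Fin 2 → Set (OnePoint ℂ × Fin 2) := fun j => {((0 : ℂ) : OnePoint ℂ)}ᶜ ×ˢ {j}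
  have hsat : ∀ j, RelSaturated relEx3₁ (V j) := by
    intro j a b h
    rcases h with ⟨rfl, rfl⟩ | ⟨rfl, rfl⟩ | ⟨rfl, rfl⟩ <;> simp [V]
  have hopen : ∀ j, IsOpen (V j) := fun j => isOpen_compl_singleton.prod (isOpen_discrete _)
  have hnode : ∀ j, (((0 : ℂ) : OnePoint ℂ), (0 : Fin 2)) ∉ V j := by simp [V]
  have hsplit : ({Quot.mk relEx3₁ (((0 : ℂ) : OnePoint ℂ), 0)}ᶜ : Set (Quot relEx3₁)) =
      Quot.mk _ '' V 0 ∪ Quot.mk _ '' V 1 := by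
    ext q
    obtain ⟨⟨s, j⟩, rfl⟩ := Quot.exists_rep q
    constructor
    · intro hq
      have hs : s ≠ ((0 : ℂ) : OnePoint ℂ) := by
        rintro rfl
        fin_cases j
        · exact hq rfl
        · exact hq (Quot.sound (r := relEx3₁) (Or.inl ⟨rfl, rfl⟩)).symm
      fin_cases j
      · exact Or.inl ⟨(s, 0), ⟨hs, rfl⟩, rfl⟩
      · exact Or.inr ⟨(s, 1), ⟨hs, rfl⟩, rfl⟩
    · rintro (⟨a, ha, h⟩ | ⟨a, ha, h⟩) <;> rw [← h]
      exacts [(hsat 0).mk_ne_mk ha (hnode 0), (hsat 1).mk_ne_mk ha (hnode 1)]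
  have hdisj : Disjoint (Quot.mk relEx3₁ '' V 0) (Quot.mk relEx3₁ '' V 1) := by
    rw [disjoint_left]
    rintro _ ⟨a, ha, rfl⟩ ⟨b, hb, hba⟩
    exact (hsat 0).mk_ne_mk ha (fun hb' => by simp_all [V]) hba.symm
  intro hconn
  rw [hsplit] at hconn
  exact not_isPreconnected_union_of_isOpen ((hsat 0).isOpen_image_mk (hopen 0))
    ((hsat 1).isOpen_image_mk (hopen 1)) hdisj (by simp [V]) (by simp [V]) hconn.isPreconnected

theorem isConnected_compl_singleton_X2 (q : Quot relEx3₂) : IsConnected ({q}ᶜ : Set _) := by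
  set σ : Fin 2 → OnePoint ℂ → Quot relEx3₂ := fun j t => Quot.mk _ (t, j)
  have hcont : ∀ j, Continuous (σ j) := fun j => continuous_quot_mk.comp (by fun_prop)
  set P : Set (OnePoint ℂ × Fin 2) := {(((0 : ℂ) : OnePoint ℂ), 0), (((0 : ℂ) : OnePoint ℂ), 1),
    (((1 : ℂ) : OnePoint ℂ), 0), (((2 : ℂ) : OnePoint ℂ), 1), (((1 : ℂ) : OnePoint ℂ), 1),
    (((2 : ℂ) : OnePoint ℂ), 0)}
  have hsupp : ∀ ⦃a b⦄, relEx3₂ a b → a ∈ P ∧ b ∈ P := by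
    intro a b h
    rcases h with ⟨rfl, rfl⟩ | ⟨rfl, rfl⟩ | ⟨rfl, rfl⟩ <;> simp [P]
  have hfib : ∀ j q, (σ j ⁻¹' {q}).Finite := fun j q =>
    Finite.preimage (f := fun t => (t, j)) (Prod.mk_left_injective j).injOn
      (Quot.finite_mk_preimage_singleton (toFinite _) hsupp q)
  have hcover : range (σ 0) ∪ range (σ 1) = univ := by
    refine eq_univ_of_forall fun q => ?_
    obtain ⟨⟨t, j⟩, rfl⟩ := Quot.exists_rep q
    fin_cases j
    exacts [Or.inl ⟨t, rfl⟩, Or.inr ⟨t, rfl⟩]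
  have hsat : RelSaturated relEx3₂ ({((0 : ℂ) : OnePoint ℂ)} ×ˢ univ) := by
    intro a b h
    rcases h with ⟨rfl, rfl⟩ | ⟨rfl, rfl⟩ | ⟨rfl, rfl⟩ <;> simp
  have hne : σ 0 (0 : ℂ) ≠ σ 0 (1 : ℂ) := hsat.mk_ne_mk (by simp) (by simp)
  have hnode : σ 1 (0 : ℂ) = σ 0 (0 : ℂ) :=
    (Quot.sound (r := relEx3₂) (Or.inl ⟨rfl, rfl⟩)).symm
  have hglue : σ 1 (2 : ℂ) = σ 0 (1 : ℂ) :=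
    (Quot.sound (r := relEx3₂) (Or.inr (Or.inl ⟨rfl, rfl⟩))).symm
  exact isConnected_compl_singleton_of_two_sheets
    (fun _ hF => OnePoint.isConnected_compl_of_countable (by simp [Complex.rank_real_complex])
      hF.countable) (hcont 0) (hcont 1) (hfib 0) (hfib 1) hcover hne ⟨⟨_, rfl⟩, _, hnode⟩
    ⟨⟨_, rfl⟩, _, hglue⟩ q

/-- the quotients `X₁ = Quot relEx3₁` and `X₂ = Quot relEx3₂` are not
homeomorphic topological spaces. -/
theorem double_cover_statement_13 : ¬ Nonempty (Quot relEx3₁ ≃ₜ Quot relEx3₂) := by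
  rintro ⟨e⟩
  exact not_isConnected_compl_node_X1
    ((e.isConnected_compl_singleton_iff _).1 (isConnected_compl_singleton_X2 _))
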